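/- Trace slicing is monotone in the binding: if θ₁ ⊑ θ₂ are partial bindings, then for every parametric trace τ, the slice τ ↾ θ₁ is a sublist (order-preserving subsequence) of the slice τ ↾ θ₂. -/
import Mathlib


/-- `θ' ⊑ θ`: whenever `θ' x` is defined, `θ x` is defined with the same value. -/
def LessInf {X V : Type*} (θ' θ : X → Option V) : Prop :=
  ∀ x v, θ' x = some v → θ x = some v

open Classical in
/-- The `θ`-trace traceSlice of a parametric trace. -/
noncomputable def traceSlice {E X V : Type*} (θ : X → Option V) :
    List (E × (X → Option V)) → List E
  | [] => []
  | (e, θ') :: τ => if LessInf θ' θ then e :: traceSlice θ τ else traceSlice θ τ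

/-- Slicing is monotone in the binding: if `θ₁ ⊑ θ₂` then `τ ↾ θ₁` is an
order-preserving subsequence (sublist) of `τ ↾ θ₂`. -/
theorem slice_monotone {E X V : Type*} {θ₁ θ₂ : X → Option V}
    (h : LessInf θ₁ θ₂) (τ : List (E × (X → Option V))) :
    (traceSlice θ₁ τ).Sublist (traceSlice θ₂ τ) := by
  induction τ with
  | nil => simp [traceSlice]
  | cons p τ ih =>
    obtain ⟨e, θ'⟩ := p
    by_cases h1 : LessInf θ' θ₁
    · have h2 : LessInf θ' θ₂ := fun x v hx => h x v (h1 x v hx)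
      simpa [traceSlice, h1, h2] using ih.cons₂ e
    · by_cases h2 : LessInf θ' θ₂ <;> simp [traceSlice, h1, h2]
      · exact ih.cons e
      · exact ih
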